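/- Let v, u, u' be three distinct points in the plane, each pair among (v,u) and (v,u') and (u,u') relevant within distance r. Then u ⪯_v u' if and only if v ⪯_u u', where ⪯ is the arc-containment relation on disk boundaries. -/

import Mathlib

open Metric

noncomputable section

/-- Points of the plane. -/
abbrev Pt := EuclideanSpace ℝ (Fin 2)

/-- `Zd r p` : the closed disk (communication zone) of radius `r` centered at `p`. -/
def Zd (r : ℝ) (p : Pt) : Set Pt := Metric.closedBall p r

/-- `Zb r p` : the boundary circle of the communication zone of `p`. -/
def Zb (r : ℝ) (p : Pt) : Set Pt := Metric.sphere p r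

/-- The arc-containment relation `a ⪯_v b`. -/
def arcLe (r : ℝ) (v a b : Pt) : Prop := Zd r a ∩ Zb r v ⊆ Zd r b ∩ Zb r v

/-- `u` is a neighbor of `v`. -/
def Nbr (r : ℝ) (v u : Pt) : Prop := u ≠ v ∧ dist u v ≤ r

/-- General position: no three distinct points of `V` are collinear. -/
def GenPos (V : Set Pt) : Prop :=
  ∀ a ∈ V, ∀ b ∈ V, ∀ c ∈ V, a ≠ b → a ≠ c → b ≠ c → ¬ Collinear ℝ ({a, b, c} : Set Pt)

/-- `u` is a maximal neighbor of `v` within `V`. -/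
def MaxNbr (V : Set Pt) (r : ℝ) (v u : Pt) : Prop :=
  u ∈ V ∧ Nbr r v u ∧ ∀ u' ∈ V, u' ≠ u → Nbr r v u' → ¬ arcLe r v u u'

/-- `v` is an interior node of `V`. -/
def IsInterior (V : Set Pt) (r : ℝ) (v : Pt) : Prop :=
  ∀ z ∈ Zb r v, ∃ v' ∈ V, v' ≠ v ∧ z ∈ Zd r v'

/-- Counterclockwise rotation by `π/2`. -/
def rot90 (x : Pt) : Pt := (WithLp.equiv 2 (Fin 2 → ℝ)).symm ![-(x 1), x 0]

/-- The boundary intersection `CCW(v, v')` of the circles `∂Z(v)` and `∂Z(v')`: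
traversing from `CCW(v,v')` to `CW(v,v')` clockwise along `∂Z(v)` sweeps an angle `< π`. -/
def ccwPt (r : ℝ) (v v' : Pt) : Pt :=
  midpoint ℝ v v' + (Real.sqrt (r ^ 2 - (dist v v' / 2) ^ 2) / dist v v') • rot90 (v' - v)

/-- The boundary intersection `CW(v, v')`. -/
def cwPt (r : ℝ) (v v' : Pt) : Pt :=
  midpoint ℝ v v' - (Real.sqrt (r ^ 2 - (dist v v' / 2) ^ 2) / dist v v') • rot90 (v' - v)

/-- A communication wheel of `v` with `m` rim nodes `w 0, …, w (m-1)` (indices mod `m`). -/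
def IsCommWheel (V : Set Pt) (r : ℝ) (v : Pt) (m : ℕ) (w : ZMod m → Pt) : Prop :=
  3 ≤ m ∧ Function.Injective w ∧
  (∀ i, MaxNbr V r v (w i)) ∧
  (∀ i, dist (w i) (w (i + 1)) ≤ r) ∧
  (∀ i, ccwPt r v (w i) ∈ Zd r (w (i + 1)) ∧ cwPt r v (w i) ∈ Zd r (w (i - 1)))

/-!
Both arcs `Z(u) ∩ ∂Z(v)` and `Z(v) ∩ ∂Z(u)` have as endpoints the two points `p, q` of
`∂Z(u) ∩ ∂Z(v)`. On the circle `∂Z(u)`, lying in a disk `Z(b)` is the half-plane condition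
`‖b - u‖² / 2 ≤ ⟪z - u, b - u⟫`, and every point `z` of the arc `Z(v) ∩ ∂Z(u)` satisfies
`z - u = l • (p - u) + m • (q - u)` with `l, m ≥ 0`, `l + m ≥ 1`. Hence that arc lies in `Z(u')` as
soon as `p` and `q` do, which they do when the other arc lies in `Z(u')`.
-/

open scoped RealInnerProductSpace

@[simp] lemma rot90_apply_zero (x : Pt) : rot90 x 0 = -x 1 := rfl
@[simp] lemma rot90_apply_one (x : Pt) : rot90 x 1 = x 0 := rfl

lemma inner_rot90_self (x : Pt) : ⟪rot90 x, x⟫ = 0 := by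
  simp [PiLp.inner_apply, Fin.sum_univ_two]; ring

lemma norm_rot90 (x : Pt) : ‖rot90 x‖ = ‖x‖ := by
  simp [EuclideanSpace.norm_eq, Fin.sum_univ_two, add_comm]

lemma norm_sq_smul_eq_inner_smul_add (a w : Pt) :
    ‖a‖ ^ 2 • w = ⟪w, a⟫ • a + ⟪w, rot90 a⟫ • rot90 a := by
  ext i
  fin_cases i <;> simp [EuclideanSpace.norm_sq_eq, PiLp.inner_apply, Fin.sum_univ_two] <;> ring

lemma norm_smul_add_smul_rot90_sq (s t : ℝ) (a : Pt) :
    ‖s • a + t • rot90 a‖ ^ 2 = (s ^ 2 + t ^ 2) * ‖a‖ ^ 2 := by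
  rw [norm_add_sq_real, norm_smul, norm_smul, real_inner_smul_left, real_inner_smul_right,
    real_inner_comm, inner_rot90_self, norm_rot90]
  simp [mul_pow]; ring

lemma dist_le_iff_le_inner {E : Type*} [NormedAddCommGroup E] [InnerProductSpace ℝ E]
    {x u u' : E} {r : ℝ} (hx : dist x u = r) :
    dist x u' ≤ r ↔ ‖u' - u‖ ^ 2 / 2 ≤ ⟪x - u, u' - u⟫ := by
  have hr : 0 ≤ r := hx ▸ dist_nonneg
  rw [dist_eq_norm] at hx ⊢
  rw [← pow_le_pow_iff_left₀ (norm_nonneg _) hr two_ne_zero,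
    show x - u' = (x - u) - (u' - u) by abel, norm_sub_sq_real, hx]
  constructor <;> intro h <;> linarith

lemma dist_half_add_smul_rot90_eq {u a : Pt} {r s : ℝ} (hr : 0 ≤ r)
    (hs : s ^ 2 * ‖a‖ ^ 2 = r ^ 2 - ‖a‖ ^ 2 / 4) :
    dist (u + ((1 / 2 : ℝ) • a + s • rot90 a)) u = r ∧
      dist (u + ((1 / 2 : ℝ) • a + s • rot90 a)) (u + a) = r := by
  have key : ∀ c : ℝ, c ^ 2 = 1 / 4 → ‖c • a + s • rot90 a‖ = r := fun c hc => by
    rw [← sq_eq_sq₀ (norm_nonneg _) hr, norm_smul_add_smul_rot90_sq]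
    linear_combination ‖a‖ ^ 2 * hc + hs
  constructor
  · rw [dist_eq_norm, add_sub_cancel_left]
    exact key _ (by norm_num)
  · rw [dist_eq_norm, show u + ((1 / 2 : ℝ) • a + s • rot90 a) - (u + a)
        = (-1 / 2 : ℝ) • a + s • rot90 a by module]
    exact key _ (by norm_num)

lemma exists_smul_add_smul_of_le_inner {a w : Pt} {r t : ℝ} (ha : a ≠ 0) (ht : 0 < t)
    (hta : t ^ 2 * ‖a‖ ^ 2 = r ^ 2 - ‖a‖ ^ 2 / 4) (hw : ‖w‖ = r) (hwa : ‖a‖ ^ 2 / 2 ≤ ⟪w, a⟫) :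
    ∃ l m : ℝ, 0 ≤ l ∧ 0 ≤ m ∧ 1 ≤ l + m ∧
      w = l • ((1 / 2 : ℝ) • a + t • rot90 a) + m • ((1 / 2 : ℝ) • a - t • rot90 a) := by
  set S := ⟪w, a⟫
  set T := ⟪w, rot90 a⟫
  have hdecomp := norm_sq_smul_eq_inner_smul_add a w
  have ha2 : 0 < ‖a‖ ^ 2 := by positivity
  have hST : S ^ 2 + T ^ 2 = r ^ 2 * ‖a‖ ^ 2 := by
    have := congrArg (‖·‖ ^ 2) hdecomp
    simp only [norm_smul_add_smul_rot90_sq, norm_smul, Real.norm_eq_abs, abs_pow, abs_norm,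
      mul_pow, hw] at this
    nlinarith
  have hS : 0 ≤ 2 * t * S := mul_nonneg (by positivity) (by linarith)
  obtain ⟨hTl, hTu⟩ : -(2 * t * S) ≤ T ∧ T ≤ 2 * t * S := by
    refine abs_le_of_sq_le_sq' ?_ hS
    nlinarith [mul_le_mul_of_nonneg_left (pow_le_pow_left₀ (by positivity) hwa 2) (sq_nonneg t)]
  have hw' : w = (S / ‖a‖ ^ 2) • a + (T / ‖a‖ ^ 2) • rot90 a := by
    rw [div_eq_inv_mul, div_eq_inv_mul, mul_smul, mul_smul, ← smul_add, ← hdecomp,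
      inv_smul_smul₀ ha2.ne']
  have hTt : -S ≤ T / (2 * t) ∧ T / (2 * t) ≤ S := by
    constructor
    · rw [le_div_iff₀ (by positivity)]; linarith
    · rw [div_le_iff₀ (by positivity)]; linarith
  refine ⟨(S + T / (2 * t)) / ‖a‖ ^ 2, (S - T / (2 * t)) / ‖a‖ ^ 2,
    div_nonneg (by linarith) ha2.le, div_nonneg (by linarith) ha2.le, ?_, ?_⟩
  · rw [← add_div, le_div_iff₀ ha2]; linarith
  · rw [hw']
    match_scalars <;> field_simp <;> ring

theorem arcLe_swap_of_dist_lt {r : ℝ} {v u u' : Pt} (hd : dist v u < 2 * r)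
    (H : arcLe r v u u') : arcLe r u v u' := by
  rcases eq_or_ne v u with rfl | hvu
  · exact H
  set a := v - u
  have ha : a ≠ 0 := sub_ne_zero.2 hvu
  have hv : v = u + a := (add_sub_cancel u v).symm
  have hda : dist v u = ‖a‖ := dist_eq_norm v u
  have hr : 0 < r := by linarith [dist_pos.2 hvu]
  have ha2 : ‖a‖ ^ 2 / 4 < r ^ 2 := by nlinarith [norm_nonneg a]
  set t := √(r ^ 2 - ‖a‖ ^ 2 / 4) / ‖a‖
  have ht : 0 < t := div_pos (Real.sqrt_pos.2 (by linarith)) (norm_pos_iff.2 ha)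
  have hta : t ^ 2 * ‖a‖ ^ 2 = r ^ 2 - ‖a‖ ^ 2 / 4 := by
    rw [div_pow, div_mul_cancel₀ _ (by positivity), Real.sq_sqrt (by linarith)]
  set b := u' - u
  have hend : ∀ s : ℝ, s ^ 2 = t ^ 2 → ‖b‖ ^ 2 / 2 ≤ ⟪(1 / 2 : ℝ) • a + s • rot90 a, b⟫ := by
    intro s hs
    obtain ⟨hpu, hpv⟩ := dist_half_add_smul_rot90_eq (u := u) hr.le (hs ▸ hta)
    have := (H ⟨hpu.le, hv ▸ hpv⟩).1
    rwa [Zd, mem_closedBall, dist_le_iff_le_inner hpu, add_sub_cancel_left] at this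
  rintro z ⟨hzv, hzu : dist z u = r⟩
  refine ⟨?_, hzu⟩
  obtain ⟨l, m, hl, hm, hlm, hz⟩ := exists_smul_add_smul_of_le_inner ha ht hta
    (by rwa [← dist_eq_norm]) ((dist_le_iff_le_inner hzu).1 hzv)
  have hp := hend t rfl
  have hq := hend (-t) (neg_sq t)
  rw [neg_smul, ← sub_eq_add_neg] at hq
  rw [Zd, mem_closedBall, dist_le_iff_le_inner hzu, hz, inner_add_left, real_inner_smul_left,
    real_inner_smul_left]
  nlinarith [mul_le_mul_of_nonneg_left hp hl, mul_le_mul_of_nonneg_left hq hm]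

theorem stmt_1_general (r : ℝ) (hr : 0 < r) (v u u' : Pt)
    (h1 : dist v u ≤ r) :
    arcLe r v u u' ↔ arcLe r u v u' := by
  have hd : dist v u < 2 * r := by linarith
  exact ⟨arcLe_swap_of_dist_lt hd, arcLe_swap_of_dist_lt (dist_comm v u ▸ hd)⟩

/-- Lemma: duality of the arc-containment relation. -/
theorem stmt_1 (r : ℝ) (hr : 0 < r) (v u u' : Pt)
    (hvu : v ≠ u) (hvu' : v ≠ u') (huu' : u ≠ u')
    (hcol : ¬ Collinear ℝ ({v, u, u'} : Set Pt))
    (h1 : dist v u ≤ r) (h2 : dist v u' ≤ r) (h3 : dist u u' ≤ r) :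
    arcLe r v u u' ↔ arcLe r u v u' :=
  stmt_1_general r hr v u u' h1
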